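/- arXiv:1009.2389 — 2 statements merged into one kernel-verified Lean document; each statement's English description precedes it below -/
import Mathlib

section
/- Fix k ∈ ℕ and n ≥ 1. For every π ∈ NC^{(k)}(n): Σ_{V ∈ blocks(π ∪ Kr(π))} (mult(V) − 1) = k, where mult(V) := |V| / |Red(V)| is the multiplicity of the block V of π ∪ Kr(π). -/
open scoped BigOperators
attribute [local instance] Classical.propDecidable

/-- A (set) partition of a type `X`: nonempty blocks, every point in a unique block. -/
def IsPartition {X : Type*} (P : Finset (Finset X)) : Prop :=
  (∀ B ∈ P, B.Nonempty) ∧ ∀ x : X, ∃! B, B ∈ P ∧ x ∈ B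

/-- Non-crossing collection of blocks in a linear order. -/
def IsNonCrossing {X : Type*} [LinearOrder X] (P : Finset (Finset X)) : Prop :=
  ∀ a b c d : X, a < b → b < c → c < d →
    (∃ B ∈ P, a ∈ B ∧ c ∈ B) → (∃ B ∈ P, b ∈ B ∧ d ∈ B) →
    ∃ B ∈ P, a ∈ B ∧ b ∈ B

/-- The finset `NC(n)` of non-crossing partitions of `[n]` (modelled on `Fin n`). -/
noncomputable def ncFinset (n : ℕ) : Finset (Finset (Finset (Fin n))) :=
  Finset.univ.filter fun P => IsPartition P ∧ IsNonCrossing P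

/-- The subtuple `(a_1,…,a_n)|V` of the entries indexed by `V`, in increasing order. -/
noncomputable def restrictTuple {A : Type*} {n : ℕ} (a : Fin n → A) (V : Finset (Fin n)) :
    Fin V.card → A :=
  fun i => a (V.orderIsoOfFin rfl i).1
/-- The interleaved set `[m] ∪ [m̄]` with order `1 < 1̄ < 2 < 2̄ < ⋯ < m < m̄`
(unbarred = `false`, barred = `true`). -/
abbrev Interl (m : ℕ) := Lex (Fin m × Bool)

/-- The copy of a block of `[m]` inside the unbarred part of `[m] ∪ [m̄]`. -/
def unbar {m : ℕ} (B : Finset (Fin m)) : Finset (Interl m) :=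
  B.image fun i => toLex (i, false)

/-- The copy of a block of `[m]` inside the barred part of `[m] ∪ [m̄]`. -/
def barred {m : ℕ} (B : Finset (Fin m)) : Finset (Interl m) :=
  B.image fun i => toLex (i, true)

/-- The union `p ∪ q` of a partition `p` of `[m]` and a partition `q` of the barred copy
`[m̄]` (blocks of `q` being recorded by their unbarred labels), as a collection of blocks
of the interleaved set `[m] ∪ [m̄]`. -/
noncomputable def unionPart {m : ℕ} (p q : Finset (Finset (Fin m))) :
    Finset (Finset (Interl m)) :=
  p.image unbar ∪ q.image barred

/-- `P` refines `Q` (reverse refinement order: `P ≼ Q`). -/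
def Refines {X : Type*} (P Q : Finset (Finset X)) : Prop :=
  ∀ B ∈ P, ∃ C ∈ Q, B ⊆ C

/-- `q` is the Kreweras complement of `p`: `q` is a partition of `[m̄]` (identified with
a partition of `[m]` by relabeling) such that `p ∪ q` is non-crossing on the interleaved
set, and `q` is the greatest such partition for the reverse refinement order. -/
def IsKr {m : ℕ} (p q : Finset (Finset (Fin m))) : Prop :=
  IsPartition q ∧ IsNonCrossing (unionPart p q) ∧
    ∀ q' : Finset (Finset (Fin m)), IsPartition q' → IsNonCrossing (unionPart p q') →
      Refines q' q

/-- The Kreweras complement `Kr(p)`, as a function (defined via choice: for a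
non-crossing partition `p` the complement exists and is unique). -/
noncomputable def kr {m : ℕ} (p : Finset (Finset (Fin m))) : Finset (Finset (Fin m)) :=
  if h : ∃ q, IsKr p q then h.choose else ∅
/-- The reduction map `Red : [(k+1)n] → [n]`, sending `x` to its residue mod `n`
(with `Fin` modelling, `x ↦ x % n`). -/
def red {k n : ℕ} (x : Fin ((k + 1) * n)) : Fin n :=
  ⟨x.1 % n, Nat.mod_lt _ (Nat.pos_of_ne_zero (by rintro rfl; exact absurd x.2 (by simp)))⟩

/-- The image of a collection of blocks under the reduction map. -/
noncomputable def redPart {k n : ℕ} (P : Finset (Finset (Fin ((k + 1) * n)))) :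
    Finset (Finset (Fin n)) :=
  P.image fun B => B.image red

/-- The reduction map on the interleaved set, preserving bars. -/
def redInterl {k n : ℕ} (x : Interl ((k + 1) * n)) : Interl n :=
  toLex (red (ofLex x).1, (ofLex x).2)

/-- `NC^{(k)}(n)`: the non-crossing partitions of `[(k+1)n]` satisfying the mod `n`
reduction property, i.e. `Red(π)` is a non-crossing partition of `[n]` and
`Red(Kr(π))` is a non-crossing partition of `[n̄]`. -/
def NCk (k n : ℕ) : Set (Finset (Finset (Fin ((k + 1) * n)))) :=
  {π | IsPartition π ∧ IsNonCrossing π ∧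
       IsPartition (redPart π) ∧ IsNonCrossing (redPart π) ∧
       IsPartition (redPart (kr π)) ∧ IsNonCrossing (redPart (kr π))}

/-!
For a non-crossing partition `p` of `m` points the Kreweras complement is explicit: `ī ∼ j̄` iff
`(i, j]` is a union of blocks of `p`; counting class minima against block maxima gives
`|p| + |Kr p| = m + 1`.

Let `K = Kr π`. The blocks of `π` over a block `W` of `Red π` tile `Red⁻¹ W`, which has
`(k + 1) |W|` points, so `|π| ≤ (k + 1) |Red π|`, and likewise `|K| ≤ (k + 1) |Red K|`. A relation
`i ∼ j` of `Kr(Red π)` lifts to one of `K`, so `Kr(Red π) ≼ Red K`, and the two counting identities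
force `Red K = Kr(Red π)`. Then `Red` sends cyclic successors inside a block of `π` or `K` to cyclic
successors inside its image, so `|Red V|` divides `|V|`, and
`Σ_V |V| / |Red V| = (k + 1)(|Red π| + |Red K|) = (k + 1)(n + 1)` over the `(k + 1) n + 1` blocks.
-/

open Finset

section Partition

variable {X : Type*} {P Q : Finset (Finset X)}

theorem IsPartition.eq_of_mem (hP : IsPartition P) {B C : Finset X} {x : X} (hB : B ∈ P)
    (hC : C ∈ P) (hxB : x ∈ B) (hxC : x ∈ C) : B = C :=
  (hP.2 x).unique ⟨hB, hxB⟩ ⟨hC, hxC⟩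

theorem IsPartition.exists_mem (hP : IsPartition P) (x : X) : ∃ B ∈ P, x ∈ B :=
  (hP.2 x).exists

theorem Refines.exists_map (h : Refines P Q) :
    ∃ f : Finset X → Finset X, ∀ B ∈ P, f B ∈ Q ∧ B ⊆ f B :=
  ⟨fun B => if hB : B ∈ P then (h B hB).choose else ∅, fun B hB => by
    simpa only [dif_pos hB] using (h B hB).choose_spec⟩

theorem IsPartition.card_le_of_refines (hP : IsPartition P) (hQ : IsPartition Q)
    (h : Refines P Q) : Q.card ≤ P.card := by
  obtain ⟨f, hf⟩ := h.exists_map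
  refine card_le_card_of_surjOn f fun C hC => ?_
  obtain ⟨x, hx⟩ := hQ.1 C hC
  obtain ⟨B, hB, hxB⟩ := hP.exists_mem x
  exact ⟨B, hB, hQ.eq_of_mem (hf B hB).1 hC ((hf B hB).2 hxB) hx⟩

theorem IsPartition.eq_of_refines_of_card_le (hP : IsPartition P) (hQ : IsPartition Q)
    (h : Refines P Q) (hcard : P.card ≤ Q.card) : P = Q := by
  obtain ⟨f, hf⟩ := h.exists_map
  have hsurj : Set.SurjOn f P Q := fun C hC => by
    obtain ⟨x, hx⟩ := hQ.1 C hC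
    obtain ⟨B, hB, hxB⟩ := hP.exists_mem x
    exact ⟨B, hB, hQ.eq_of_mem (hf B hB).1 hC ((hf B hB).2 hxB) hx⟩
  have hinj := injOn_of_surjOn_of_card_le f (fun B hB => (hf B hB).1) hsurj hcard
  have hfix : ∀ B ∈ P, f B = B := fun B hB => by
    refine Subset.antisymm ?_ (hf B hB).2
    intro y hy
    obtain ⟨B', hB', hyB'⟩ := hP.exists_mem y
    have : f B' = f B := hQ.eq_of_mem (hf B' hB').1 (hf B hB).1 ((hf B' hB').2 hyB') hy
    exact hinj hB' hB this ▸ hyB'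
  refine eq_of_subset_of_card_le (fun B hB => hfix B hB ▸ (hf B hB).1) ?_
  exact hP.card_le_of_refines hQ h

end Partition

section UnionOfBlocks

variable {X : Type*} {P : Finset (Finset X)} {S T : Finset X}

def IsUnionOfBlocks (P : Finset (Finset X)) (S : Finset X) : Prop :=
  ∀ B ∈ P, B ⊆ S ∨ Disjoint B S

theorem isUnionOfBlocks_iff :
    IsUnionOfBlocks P S ↔ ∀ B ∈ P, ∀ x ∈ B, ∀ y ∈ B, x ∈ S → y ∈ S := by
  refine ⟨fun h B hB x hx y hy hxS => ?_, fun h B hB => ?_⟩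
  · rcases h B hB with hBS | hBS
    · exact hBS hy
    · exact absurd hxS (disjoint_left.1 hBS hx)
  · by_cases hBS : ∃ x ∈ B, x ∈ S
    · obtain ⟨x, hx, hxS⟩ := hBS
      exact Or.inl fun y hy => h B hB x hx y hy hxS
    · push Not at hBS
      exact Or.inr (disjoint_left.2 hBS)

theorem IsUnionOfBlocks.mem_iff (h : IsUnionOfBlocks P S) {B : Finset X} (hB : B ∈ P)
    {x y : X} (hx : x ∈ B) (hy : y ∈ B) : x ∈ S ↔ y ∈ S :=
  ⟨isUnionOfBlocks_iff.1 h B hB x hx y hy, isUnionOfBlocks_iff.1 h B hB y hy x hx⟩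

theorem IsUnionOfBlocks.symmDiff [DecidableEq X] (hS : IsUnionOfBlocks P S)
    (hT : IsUnionOfBlocks P T) : IsUnionOfBlocks P (symmDiff S T) :=
  isUnionOfBlocks_iff.2 fun B hB x hx y hy => by
    simp only [mem_symmDiff, hS.mem_iff hB hx hy, hT.mem_iff hB hx hy, imp_self]

theorem IsUnionOfBlocks.sdiff [DecidableEq X] (hS : IsUnionOfBlocks P S)
    (hT : IsUnionOfBlocks P T) : IsUnionOfBlocks P (S \ T) :=
  isUnionOfBlocks_iff.2 fun B hB x hx y hy => by
    simp only [mem_sdiff, hS.mem_iff hB hx hy, hT.mem_iff hB hx hy, imp_self]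

theorem IsUnionOfBlocks.compl [DecidableEq X] [Fintype X] (hS : IsUnionOfBlocks P S) :
    IsUnionOfBlocks P Sᶜ :=
  isUnionOfBlocks_iff.2 fun B hB x hx y hy => by
    simp only [mem_compl, hS.mem_iff hB hx hy, imp_self]

theorem isUnionOfBlocks_compl_iff [DecidableEq X] [Fintype X] :
    IsUnionOfBlocks P Sᶜ ↔ IsUnionOfBlocks P S :=
  ⟨fun h => compl_compl S ▸ h.compl, IsUnionOfBlocks.compl⟩

end UnionOfBlocks

namespace Fin

variable {m : ℕ} [NeZero m]

theorem val_add_one' (x : Fin m) : (x + 1).val = if x.val + 1 = m then 0 else x.val + 1 := by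
  rw [Fin.val_add, Fin.val_one']
  rcases Nat.lt_or_ge 1 m with hm | hm
  · rw [Nat.mod_eq_of_lt hm]
    split_ifs with h
    · rw [h, Nat.mod_self]
    · exact Nat.mod_eq_of_lt (by omega)
  · have : m = 1 := by have := NeZero.pos m; omega
    subst this
    simp [Subsingleton.elim x 0]

theorem val_sub_one' (x : Fin m) : (x - 1).val = if x.val = 0 then m - 1 else x.val - 1 := by
  rw [Fin.val_sub, Fin.val_one']
  rcases Nat.lt_or_ge 1 m with hm | hm
  · rw [Nat.mod_eq_of_lt hm]
    split_ifs with h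
    · rw [h, Nat.add_zero, Nat.mod_eq_of_lt (by omega)]
    · rw [show m - 1 + x = (x - 1) + m by omega, Nat.add_mod_right, Nat.mod_eq_of_lt (by omega)]
  · have : m = 1 := by have := NeZero.pos m; omega
    subst this
    simp [Subsingleton.elim x 0]

end Fin

section CyclicOrder

variable {X : Type*} [LinearOrder X] {P : Finset (Finset X)}

-- For `u = v` every `w ≠ u` lies between, so a singleton block is its own cyclic successor.
def CycBtw (u w v : X) : Prop :=
  if u < v then u < w ∧ w < v else u < w ∨ w < v

def CycSucc (W : Finset X) (u v : X) : Prop :=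
  u ∈ W ∧ v ∈ W ∧ ∀ w ∈ W, ¬CycBtw u w v

theorem CycBtw.of_not {u w v : X} (h : ¬CycBtw u w v) (hwu : w ≠ u) (hwv : w ≠ v)
    (huv : u ≠ v) : CycBtw v w u := by
  unfold CycBtw at *
  rcases lt_or_gt_of_ne huv with huv | huv <;>
    rcases lt_trichotomy w u with hwu' | rfl | hwu' <;>
    rcases lt_trichotomy w v with hwv' | rfl | hwv' <;> simp_all <;> order

theorem cycSucc_max'_min' {B : Finset X} (hB : B.Nonempty) :
    CycSucc B (B.max' hB) (B.min' hB) := by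
  refine ⟨B.max'_mem hB, B.min'_mem hB, fun w hw => ?_⟩
  rw [CycBtw, if_neg (not_lt.2 (B.min'_le_max' hB))]
  exact fun h => h.elim (not_lt.2 (B.le_max' w hw)) (not_lt.2 (B.min'_le w hw))

theorem exists_cycSucc_left {B : Finset X} {x : X} (hx : x ∈ B) :
    ∃ z, CycSucc B z x := by
  set S := B.filter (· < x) with hS
  by_cases hlt : S.Nonempty
  · have hzS := mem_filter.1 (S.max'_mem hlt)
    refine ⟨S.max' hlt, hzS.1, hx, fun w hw => ?_⟩
    rw [CycBtw, if_pos hzS.2]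
    exact fun h => not_le.2 h.1 (S.le_max' w (mem_filter.2 ⟨hw, h.2⟩))
  · have hmin : B.min' ⟨x, hx⟩ = x :=
      le_antisymm (B.min'_le x hx) (B.le_min' _ x fun y hy => not_lt.1 fun h =>
        hlt ⟨y, mem_filter.2 ⟨hy, h⟩⟩)
    exact ⟨_, hmin ▸ cycSucc_max'_min' ⟨x, hx⟩⟩

theorem IsNonCrossing.eq_of_lt (hP : IsPartition P) (hnc : IsNonCrossing P)
    {B B' : Finset X} (hB : B ∈ P) (hB' : B' ∈ P) {a b c d : X} (ha : a ∈ B) (hb : b ∈ B')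
    (hc : c ∈ B) (hd : d ∈ B') (hab : a < b) (hbc : b < c) (hcd : c < d) : B = B' := by
  obtain ⟨E, hE, haE, hbE⟩ := hnc a b c d hab hbc hcd ⟨B, hB, ha, hc⟩ ⟨B', hB', hb, hd⟩
  exact (hP.eq_of_mem hE hB haE ha).symm.trans (hP.eq_of_mem hE hB' hbE hb)

theorem IsNonCrossing.eq_of_cycBtw (hP : IsPartition P) (hnc : IsNonCrossing P)
    {B B' : Finset X} (hB : B ∈ P) (hB' : B' ∈ P) {a b c d : X} (ha : a ∈ B) (hb : b ∈ B')
    (hc : c ∈ B) (hd : d ∈ B') (hac : a ≠ c) (habc : CycBtw a b c) (hcda : CycBtw c d a) :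
    B = B' := by
  unfold CycBtw at habc hcda
  rcases lt_or_gt_of_ne hac with h | h
  · rw [if_pos h] at habc
    rw [if_neg (not_lt_of_gt h)] at hcda
    rcases hcda with hcd | hda
    · exact hnc.eq_of_lt hP hB hB' ha hb hc hd habc.1 habc.2 hcd
    · exact (hnc.eq_of_lt hP hB' hB hd ha hb hc hda habc.1 habc.2).symm
  · rw [if_neg (not_lt_of_gt h)] at habc
    rw [if_pos h] at hcda
    rcases habc with hab | hbc
    · exact hnc.eq_of_lt hP hB hB' hc hd ha hb hcda.1 hcda.2 hab
    · exact (hnc.eq_of_lt hP hB' hB hb hc hd ha hbc hcda.1 hcda.2).symm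

variable [Fintype X]

noncomputable def cycIoo (u v : X) : Finset X :=
  univ.filter (CycBtw u · v)

theorem mem_cycIoo {u v w : X} : w ∈ cycIoo u v ↔ CycBtw u w v := by
  simp [cycIoo]

theorem IsNonCrossing.isUnionOfBlocks_cycIoo (hP : IsPartition P) (hnc : IsNonCrossing P)
    {B : Finset X} (hB : B ∈ P) {b b' : X} (h : CycSucc B b b') :
    IsUnionOfBlocks P (cycIoo b b') := by
  refine isUnionOfBlocks_iff.2 fun B' hB' u hu v hv huS => ?_
  rw [mem_cycIoo] at huS ⊢
  by_contra hvS
  have hne : B ≠ B' := fun h' => h.2.2 u (h' ▸ hu) huS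
  have hvb : v ≠ b := fun h' => hne (hP.eq_of_mem hB hB' h.1 (h' ▸ hv))
  have hvb' : v ≠ b' := fun h' => hne (hP.eq_of_mem hB hB' h.2.1 (h' ▸ hv))
  by_cases hbb : b = b'
  · subst hbb
    simp only [CycBtw, lt_self_iff_false, if_false, not_or, not_lt] at hvS
    exact hvb (le_antisymm hvS.1 hvS.2)
  · exact hne (hnc.eq_of_cycBtw hP hB hB' h.1 hu h.2.1 hv hbb huS
      (CycBtw.of_not hvS hvb hvb' hbb))

theorem cycSucc_of_isUnionOfBlocks {R : Finset (Finset X)} {W : Finset X} (hW : W ∈ R)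
    {u v : X} (hu : u ∈ W) (hv : v ∈ W)
    (h : IsUnionOfBlocks R (cycIoo u v)) : CycSucc W u v := by
  refine ⟨hu, hv, fun w hw hbtw => ?_⟩
  have := (h.mem_iff hW hw hu).1 (mem_cycIoo.2 hbtw)
  rw [mem_cycIoo, CycBtw] at this
  split_ifs at this with huv
  · exact lt_irrefl u this.1
  · exact this.elim (lt_irrefl u) huv

end CyclicOrder

section CyclicFin

variable {m : ℕ} [NeZero m]

theorem cycBtw_add_one_add_one {c c' : Fin m} (h : c ≠ c') : CycBtw c (c + 1) (c' + 1) := by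
  have h1 := Fin.val_add_one' c
  have h2 := Fin.val_add_one' c'
  have := c'.isLt
  simp only [CycBtw, Fin.lt_def, ne_eq, Fin.ext_iff] at *
  split_ifs at * <;> omega

theorem CycBtw.of_add_one {c c' z : Fin m} (h : CycBtw c z (c' + 1)) (hz : z ≠ c') :
    CycBtw c z c' := by
  have h1 := Fin.val_add_one' c'
  simp only [CycBtw, Fin.lt_def, ne_eq, Fin.ext_iff] at *
  split_ifs at * <;> omega

theorem CycBtw.right_add_one {u w v : Fin m} (h : CycBtw u w v) : CycBtw w v (v + 1) := by
  have h1 := Fin.val_add_one' v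
  have := v.isLt
  simp only [CycBtw, Fin.lt_def] at *
  split_ifs at * <;> omega

theorem CycBtw.not_add_one {u w v : Fin m} (h : CycBtw u w v) : ¬CycBtw w (u + 1) (v + 1) := by
  have h1 := Fin.val_add_one' u
  have h2 := Fin.val_add_one' v
  have := u.isLt
  have := v.isLt
  simp only [CycBtw, Fin.lt_def] at *
  split_ifs at * <;> omega

end CyclicFin

section Walk

variable {α β : Type*} [LinearOrder α] [LinearOrder β]

theorem dvd_of_forall_add_one {s c : ℕ} [NeZero s] (φ : Fin s → ZMod c)
    (h : ∀ t, φ (t + 1) = φ t + 1) : c ∣ s := by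
  have hs : 0 < s := NeZero.pos s
  have hφ : ∀ j (hj : j < s), φ ⟨j, hj⟩ = φ 0 + j := by
    intro j
    induction j with
    | zero => exact fun _ => by simp [Fin.mk_zero']
    | succ j ih =>
      intro hj
      have : (⟨j + 1, hj⟩ : Fin s) = ⟨j, by omega⟩ + 1 :=
        Fin.ext (by rw [Fin.val_add_one', if_neg (by simp only; omega)])
      rw [this, h, ih, Nat.cast_succ, add_assoc]
  have hwrap : (⟨s - 1, by omega⟩ : Fin s) + 1 = 0 :=
    Fin.ext (by rw [Fin.val_add_one', if_pos (by simp only; omega), Fin.val_zero])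
  have := h ⟨s - 1, by omega⟩
  rw [hwrap, hφ (s - 1) (by omega), add_assoc, ← Nat.cast_succ, Nat.succ_eq_add_one,
    Nat.sub_add_cancel hs, left_eq_add] at this
  exact (ZMod.natCast_eq_zero_iff s c).1 this

theorem CycSucc.card_filter_lt {W : Finset β} {u v : β} (h : CycSucc W u v) :
    ((W.filter (· < v)).card : ZMod W.card) = (W.filter (· < u)).card + 1 := by
  obtain ⟨hu, hv, hbtw⟩ := h
  by_cases huv : u < v
  · have : W.filter (· < v) = insert u (W.filter (· < u)) := by
      ext w
      simp only [mem_filter, mem_insert]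
      have := hbtw w
      rw [CycBtw, if_pos huv] at this
      constructor
      · rintro ⟨hw, hwv⟩
        rcases lt_trichotomy w u with h | h | h
        · exact Or.inr ⟨hw, h⟩
        · exact Or.inl h
        · exact absurd ⟨h, hwv⟩ (this hw)
      · rintro (rfl | ⟨hw, hwu⟩)
        · exact ⟨hu, huv⟩
        · exact ⟨hw, hwu.trans huv⟩
    rw [this, card_insert_of_notMem (by simp), Nat.cast_succ]
  · have hW : ∀ w ∈ W, v ≤ w ∧ w ≤ u := fun w hw => by
      have := hbtw w hw
      rw [CycBtw, if_neg huv, not_or, not_lt, not_lt] at this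
      exact this.symm
    have h0 : W.filter (· < v) = ∅ := filter_eq_empty_iff.2 fun w hw => not_lt.2 (hW w hw).1
    have hu' : W.filter (· < u) = W.erase u := by
      ext w
      simp only [mem_filter, mem_erase]
      exact ⟨fun ⟨hw, hwu⟩ => ⟨hwu.ne, hw⟩,
        fun ⟨hwu, hw⟩ => ⟨hw, lt_of_le_of_ne (hW w hw).2 hwu⟩⟩
    rw [h0, hu', card_erase_of_mem hu, card_empty, Nat.cast_zero,
      Nat.cast_sub (card_pos.2 ⟨u, hu⟩), ZMod.natCast_self]
    ring

theorem cycSucc_orderEmbOfFin (B : Finset α) [NeZero B.card] (t : Fin B.card) :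
    CycSucc B (B.orderEmbOfFin rfl t) (B.orderEmbOfFin rfl (t + 1)) := by
  have hpos : 0 < B.card := NeZero.pos _
  by_cases ht : t.val + 1 = B.card
  · have h0 : t + 1 = ⟨0, hpos⟩ := Fin.ext (by rw [Fin.val_add_one', if_pos ht])
    have hl : t = ⟨B.card - 1, by omega⟩ := Fin.ext (by simp only; omega)
    rw [h0, orderEmbOfFin_zero rfl hpos, hl, orderEmbOfFin_last rfl hpos]
    exact cycSucc_max'_min' _
  · have h1 : (t + 1).val = t.val + 1 := by rw [Fin.val_add_one', if_neg ht]
    have hlt : t < t + 1 := Fin.lt_def.2 (by omega)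
    refine ⟨orderEmbOfFin_mem _ _ _, orderEmbOfFin_mem _ _ _, fun w hw hbtw => ?_⟩
    obtain ⟨l, rfl⟩ : w ∈ Set.range (B.orderEmbOfFin rfl) := by simpa using hw
    rw [CycBtw, if_pos ((B.orderEmbOfFin rfl).strictMono hlt)] at hbtw
    have h2 := (B.orderEmbOfFin rfl).lt_iff_lt.1 hbtw.1
    have h3 := (B.orderEmbOfFin rfl).lt_iff_lt.1 hbtw.2
    rw [Fin.lt_def] at h2 h3
    omega

/-- Walking once around `B` walks around `g '' B` a whole number of times. -/
theorem card_image_dvd_card_of_cycSucc [DecidableEq β] (B : Finset α) (g : α → β)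
    (h : ∀ b b', CycSucc B b b' → CycSucc (B.image g) (g b) (g b')) :
    (B.image g).card ∣ B.card := by
  rcases B.eq_empty_or_nonempty with rfl | hB
  · simp
  have : NeZero B.card := ⟨(card_pos.2 hB).ne'⟩
  refine dvd_of_forall_add_one
    (fun t => (((B.image g).filter (· < g (B.orderEmbOfFin rfl t))).card : ZMod _)) fun t => ?_
  exact (h _ _ (cycSucc_orderEmbOfFin B t)).card_filter_lt

end Walk

section KrewerasRelation

variable {m : ℕ} {p : Finset (Finset (Fin m))}

def krRel (p : Finset (Finset (Fin m))) (i j : Fin m) : Prop :=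
  IsUnionOfBlocks p (Ioc (min i j) (max i j))

theorem krRel_iff_of_le {i j : Fin m} (hij : i ≤ j) :
    krRel p i j ↔ IsUnionOfBlocks p (Ioc i j) := by
  rw [krRel, min_eq_left hij, max_eq_right hij]

theorem krRel_refl (i : Fin m) : krRel p i i := by
  simp [krRel, IsUnionOfBlocks]

theorem krRel.symm {i j : Fin m} (h : krRel p i j) : krRel p j i := by
  rwa [krRel, min_comm, max_comm]

theorem krRel.trans {i j l : Fin m} (hij : krRel p i j) (hjl : krRel p j l) : krRel p i l := by
  have hsplit : Ioc (min i l) (max i l) =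
      symmDiff (Ioc (min i j) (max i j)) (Ioc (min j l) (max j l)) := by
    ext x
    simp only [mem_symmDiff, mem_Ioc, min_lt_iff, le_max_iff, Fin.lt_def, Fin.le_def]
    omega
  rw [krRel, hsplit]
  exact hij.symmDiff hjl

theorem krRel_sub_one_iff [NeZero m] {u v : Fin m} :
    krRel p u (v - 1) ↔ IsUnionOfBlocks p (cycIoo u v) := by
  have hv := Fin.val_sub_one' v
  by_cases hwrap : v ≤ u ∧ v.val ≠ 0
  · rw [← isUnionOfBlocks_compl_iff, krRel]
    congr! 1
    ext x
    simp only [mem_compl, mem_cycIoo, CycBtw, mem_Ioc, min_lt_iff, le_max_iff, Fin.lt_def,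
      Fin.le_def] at hwrap ⊢
    split_ifs at hv ⊢ <;> omega
  · rw [krRel]
    congr! 1
    ext x
    simp only [mem_cycIoo, CycBtw, mem_Ioc, min_lt_iff, le_max_iff, Fin.lt_def,
      Fin.le_def] at hwrap ⊢
    split_ifs at hv ⊢ <;> omega

noncomputable def krClass (p : Finset (Finset (Fin m))) (i : Fin m) : Finset (Fin m) :=
  univ.filter (krRel p i)

noncomputable def krComplement (p : Finset (Finset (Fin m))) : Finset (Finset (Fin m)) :=
  univ.image (krClass p)

theorem mem_krClass {i j : Fin m} : j ∈ krClass p i ↔ krRel p i j := by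
  simp [krClass]

theorem krClass_eq_of_krRel {i j : Fin m} (h : krRel p i j) : krClass p i = krClass p j := by
  ext x
  simp only [mem_krClass]
  exact ⟨h.symm.trans, h.trans⟩

theorem krClass_mem_krComplement (i : Fin m) : krClass p i ∈ krComplement p :=
  mem_image_of_mem _ (mem_univ i)

theorem krComplement_isPartition : IsPartition (krComplement p) := by
  refine ⟨?_, fun x => ⟨krClass p x, ⟨krClass_mem_krComplement x, mem_krClass.2 (krRel_refl x)⟩,
    ?_⟩⟩
  · rintro _ hD
    obtain ⟨i, -, rfl⟩ := mem_image.1 hD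
    exact ⟨i, mem_krClass.2 (krRel_refl i)⟩
  · rintro _ ⟨hD, hxD⟩
    obtain ⟨i, -, rfl⟩ := mem_image.1 hD
    exact krClass_eq_of_krRel (mem_krClass.1 hxD)

theorem krRel_of_mem_krComplement {D : Finset (Fin m)} (hD : D ∈ krComplement p) {x y : Fin m}
    (hx : x ∈ D) (hy : y ∈ D) : krRel p x y := by
  obtain ⟨i, -, rfl⟩ := mem_image.1 hD
  exact (mem_krClass.1 hx).symm.trans (mem_krClass.1 hy)

theorem krRel.mem_of_mem {x y : Fin m} (h : krRel p x y) {D : Finset (Fin m)}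
    (hD : D ∈ krComplement p) (hx : x ∈ D) : y ∈ D := by
  obtain ⟨i, -, rfl⟩ := mem_image.1 hD
  exact mem_krClass.2 ((mem_krClass.1 hx).trans h)

end KrewerasRelation

section KrewerasComplement

variable {m : ℕ} {p : Finset (Finset (Fin m))}

theorem krComplement_isNonCrossing : IsNonCrossing (krComplement p) := by
  rintro a b c d hab hbc hcd ⟨D, hD, haD, hcD⟩ ⟨D', hD', hbD', hdD'⟩
  have hac := krRel_of_mem_krComplement hD haD hcD
  have hbd := krRel_of_mem_krComplement hD' hbD' hdD'
  rw [krRel_iff_of_le (hab.trans hbc).le] at hac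
  rw [krRel_iff_of_le (hbc.trans hcd).le] at hbd
  have hab' : krRel p a b := by
    rw [krRel_iff_of_le hab.le]
    convert hac.sdiff hbd using 1
    ext x
    simp only [mem_Ioc, mem_sdiff, Fin.lt_def, Fin.le_def] at hab hbc hcd ⊢
    omega
  exact ⟨krClass p a, krClass_mem_krComplement a, mem_krClass.2 (krRel_refl a),
    mem_krClass.2 hab'⟩

theorem mem_unionPart {q : Finset (Finset (Fin m))} {V : Finset (Interl m)} :
    V ∈ unionPart p q ↔ (∃ B ∈ p, unbar B = V) ∨ ∃ C ∈ q, barred C = V := by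
  simp [unionPart]

theorem toLex_mem_unbar {B : Finset (Fin m)} {i : Fin m} {b : Bool} :
    toLex (i, b) ∈ unbar B ↔ b = false ∧ i ∈ B := by
  simp [unbar, and_comm]

theorem toLex_mem_barred {B : Finset (Fin m)} {i : Fin m} {b : Bool} :
    toLex (i, b) ∈ barred B ↔ b = true ∧ i ∈ B := by
  simp [barred, and_comm]

theorem toLex_true_notMem_of_mem_unionPart {q : Finset (Finset (Fin m))}
    {V : Finset (Interl m)} (hV : V ∈ unionPart p q) {i j : Fin m} (hi : toLex (i, false) ∈ V) :
    toLex (j, true) ∉ V := by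
  rcases mem_unionPart.1 hV with ⟨B, -, rfl⟩ | ⟨C, -, rfl⟩
  · simp [toLex_mem_unbar]
  · simp [toLex_mem_barred] at hi

theorem isNonCrossing_unionPart_krComplement (hnc : IsNonCrossing p) :
    IsNonCrossing (unionPart p (krComplement p)) := by
  rintro a b c d hab hbc hcd ⟨V, hV, haV, hcV⟩ ⟨V', hV', hbV', hdV'⟩
  rcases mem_unionPart.1 hV with ⟨X, hX, rfl⟩ | ⟨Y, hY, rfl⟩ <;>
    rcases mem_unionPart.1 hV' with ⟨X', hX', rfl⟩ | ⟨Y', hY', rfl⟩ <;>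
    obtain ⟨a, ha, rfl⟩ := mem_image.1 haV <;> obtain ⟨c, hc, rfl⟩ := mem_image.1 hcV <;>
    obtain ⟨b, hb, rfl⟩ := mem_image.1 hbV' <;> obtain ⟨d, hd, rfl⟩ := mem_image.1 hdV' <;>
    simp +decide only [Prod.Lex.toLex_lt_toLex, lt_self_iff_false, and_true, and_false,
      or_false, ← le_iff_lt_or_eq] at hab hbc hcd
  · obtain ⟨E, hE, haE, hbE⟩ := hnc a b c d hab hbc hcd ⟨X, hX, ha, hc⟩ ⟨X', hX', hb, hd⟩
    exact ⟨unbar E, mem_unionPart.2 (Or.inl ⟨E, hE, rfl⟩), mem_image_of_mem _ haE,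
      mem_image_of_mem _ hbE⟩
  · -- the interval `(b, d]` is a union of blocks of `p` separating `c` from `a`
    have hbd := (krRel_iff_of_le (hbc.le.trans hcd)).1 (krRel_of_mem_krComplement hY' hb hd)
    have := (hbd.mem_iff hX ha hc).2 (by simp [mem_Ioc, hbc, hcd])
    simp only [mem_Ioc] at this
    exact absurd hab (not_le.2 this.1)
  · have hac := (krRel_iff_of_le (hab.le.trans hbc)).1 (krRel_of_mem_krComplement hY ha hc)
    have := (hac.mem_iff hX' hb hd).1 (by simp [mem_Ioc, hab, hbc])
    simp only [mem_Ioc] at this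
    exact absurd hcd (not_lt.2 this.2)
  · obtain ⟨D, hD, haD, hbD⟩ := krComplement_isNonCrossing a b c d hab hbc hcd ⟨Y, hY, ha, hc⟩
      ⟨Y', hY', hb, hd⟩
    exact ⟨barred D, mem_unionPart.2 (Or.inr ⟨D, hD, rfl⟩), mem_image_of_mem _ haD,
      mem_image_of_mem _ hbD⟩

theorem krRel_of_isNonCrossing_unionPart {q : Finset (Finset (Fin m))}
    (hncq : IsNonCrossing (unionPart p q)) {C : Finset (Fin m)} (hC : C ∈ q) {x y : Fin m}
    (hx : x ∈ C) (hy : y ∈ C) (hxy : x ≤ y) : krRel p x y := by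
  rw [krRel_iff_of_le hxy]
  refine isUnionOfBlocks_iff.2 fun B hB u hu d hd huI => ?_
  rw [mem_Ioc] at huI ⊢
  have hC' : barred C ∈ unionPart p q := mem_unionPart.2 (Or.inr ⟨C, hC, rfl⟩)
  have hB' : unbar B ∈ unionPart p q := mem_unionPart.2 (Or.inl ⟨B, hB, rfl⟩)
  by_contra hdI
  rcases not_and_or.1 hdI with hdx | hdy
  · obtain ⟨E, hE, h1, h2⟩ := hncq (toLex (d, false)) (toLex (x, true)) (toLex (u, false))
      (toLex (y, true)) (by simpa +decide [Prod.Lex.toLex_lt_toLex, le_iff_lt_or_eq] using hdx)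
      (by simpa +decide [Prod.Lex.toLex_lt_toLex] using huI.1)
      (by simpa +decide [Prod.Lex.toLex_lt_toLex, le_iff_lt_or_eq] using huI.2)
      ⟨unbar B, hB', mem_image_of_mem _ hd, mem_image_of_mem _ hu⟩
      ⟨barred C, hC', mem_image_of_mem _ hx, mem_image_of_mem _ hy⟩
    exact toLex_true_notMem_of_mem_unionPart hE h1 h2
  · obtain ⟨E, hE, h1, h2⟩ := hncq (toLex (x, true)) (toLex (u, false)) (toLex (y, true))
      (toLex (d, false)) (by simpa +decide [Prod.Lex.toLex_lt_toLex] using huI.1)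
      (by simpa +decide [Prod.Lex.toLex_lt_toLex, le_iff_lt_or_eq] using huI.2)
      (by simpa +decide [Prod.Lex.toLex_lt_toLex] using hdy)
      ⟨barred C, hC', mem_image_of_mem _ hx, mem_image_of_mem _ hy⟩
      ⟨unbar B, hB', mem_image_of_mem _ hu, mem_image_of_mem _ hd⟩
    exact toLex_true_notMem_of_mem_unionPart hE h2 h1

theorem isKr_krComplement (hnc : IsNonCrossing p) : IsKr p (krComplement p) := by
  refine ⟨krComplement_isPartition, isNonCrossing_unionPart_krComplement hnc,
    fun q hq hncq C hC => ?_⟩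
  obtain ⟨x, hx⟩ := hq.1 C hC
  refine ⟨krClass p x, krClass_mem_krComplement x, fun y hy => mem_krClass.2 ?_⟩
  rcases le_total x y with hxy | hyx
  · exact krRel_of_isNonCrossing_unionPart hncq hC hx hy hxy
  · exact (krRel_of_isNonCrossing_unionPart hncq hC hy hx hyx).symm

theorem kr_eq_krComplement (hnc : IsNonCrossing p) : kr p = krComplement p := by
  have hK := isKr_krComplement hnc
  have hex : ∃ q, IsKr p q := ⟨_, hK⟩
  obtain ⟨hq, hqnc, hqmax⟩ := hex.choose_spec
  rw [kr, dif_pos hex]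
  exact hq.eq_of_refines_of_card_le hK.1 (hK.2.2 _ hq hqnc)
    (hK.1.card_le_of_refines hq (hqmax _ hK.1 hK.2.1))

theorem card_krComplement :
    (krComplement p).card = (univ.filter fun j => ∀ i < j, ¬krRel p i j).card := by
  symm
  refine card_bij (fun j _ => krClass p j) (fun j _ => krClass_mem_krComplement j)
    (fun a ha b hb hab => ?_) (fun D hD => ?_)
  · simp only [mem_filter, mem_univ, true_and] at ha hb
    have hrel : krRel p a b := mem_krClass.1 (hab ▸ mem_krClass.2 (krRel_refl b))
    rcases lt_trichotomy a b with h | h | h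
    · exact absurd hrel (hb a h)
    · exact h
    · exact absurd hrel.symm (ha b h)
  · obtain ⟨i, -, rfl⟩ := mem_image.1 hD
    have hne : (krClass p i).Nonempty := ⟨i, mem_krClass.2 (krRel_refl i)⟩
    have hmin := mem_krClass.1 ((krClass p i).min'_mem hne)
    refine ⟨_, mem_filter.2 ⟨mem_univ _, fun j hj hrel => ?_⟩, (krClass_eq_of_krRel hmin).symm⟩
    exact not_le.2 hj ((krClass p i).min'_le _ (mem_krClass.2 (hmin.trans hrel.symm)))

theorem exists_lt_krRel_iff [NeZero m] (hp : IsPartition p) (hnc : IsNonCrossing p)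
    (j : Fin m) :
    (∃ i < j, krRel p i j) ↔ ∃ B ∈ p, ∃ hB : B.Nonempty, 0 ∉ B ∧ B.max' hB = j := by
  constructor
  · rintro ⟨i, hij, hrel⟩
    obtain ⟨B, hB, hjB⟩ := hp.exists_mem j
    have hsub : B ⊆ Ioc i j := fun x hx =>
      ((krRel_iff_of_le hij.le).1 hrel |>.mem_iff hB hjB hx).1 (mem_Ioc.2 ⟨hij, le_rfl⟩)
    refine ⟨B, hB, ⟨j, hjB⟩, fun h0 => ?_, le_antisymm ?_ (B.le_max' j hjB)⟩
    · exact absurd (mem_Ioc.1 (hsub h0)).1 (not_lt.2 (Fin.zero_le i))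
    · exact B.max'_le _ _ fun x hx => (mem_Ioc.1 (hsub hx)).2
  · rintro ⟨B, hB, hne, h0, rfl⟩
    have hmin : B.min' hne ≠ 0 := fun h => h0 (h ▸ B.min'_mem hne)
    have hgap := hnc.isUnionOfBlocks_cycIoo hp hB (cycSucc_max'_min' hne)
    refine ⟨B.min' hne - 1, ?_, (krRel_sub_one_iff.2 hgap).symm⟩
    have hle := Fin.le_def.1 (B.min'_le_max' hne)
    have hpos : (B.min' hne).val ≠ 0 := fun h => hmin (Fin.ext h)
    rw [Fin.lt_def, Fin.val_sub_one_of_ne_zero hmin]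
    omega

theorem card_add_card_krComplement [NeZero m] (hp : IsPartition p) (hnc : IsNonCrossing p) :
    p.card + (krComplement p).card = m + 1 := by
  obtain ⟨B₀, hB₀, h0⟩ := hp.exists_mem 0
  have hmax : (univ.filter fun j => ∃ i < j, krRel p i j).card = (p.erase B₀).card := by
    symm
    refine card_bij (fun B hB => B.max' (hp.1 B (mem_of_mem_erase hB))) (fun B hB => ?_)
      (fun B hB B' hB' h => ?_) (fun j hj => ?_)
    · refine mem_filter.2 ⟨mem_univ _, (exists_lt_krRel_iff hp hnc _).2
        ⟨B, mem_of_mem_erase hB, _, fun h0B => ?_, rfl⟩⟩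
      exact ne_of_mem_erase hB (hp.eq_of_mem (mem_of_mem_erase hB) hB₀ h0B h0)
    · exact hp.eq_of_mem (mem_of_mem_erase hB) (mem_of_mem_erase hB') (B.max'_mem _)
        (h ▸ B'.max'_mem _)
    · obtain ⟨B, hB, hne, h0B, rfl⟩ :=
        (exists_lt_krRel_iff hp hnc j).1 (mem_filter.1 hj).2
      exact ⟨B, mem_erase.2 ⟨fun h => h0B (h ▸ h0), hB⟩, rfl⟩
  have hsplit := card_filter_add_card_filter_not (s := univ)
    (p := fun j : Fin m => ∃ i < j, krRel p i j)
  simp only [not_exists, not_and, card_univ, Fintype.card_fin] at hsplit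
  rw [hmax, card_erase_of_mem hB₀] at hsplit
  rw [card_krComplement]
  have := card_pos.2 ⟨B₀, hB₀⟩
  omega

/-- The predecessor `z` of `c + 1` in its block is related to `c`, hence lies in the class of `c`;
as `(c, c']` is a union of blocks containing `c + 1`, it is `c'`. -/
theorem exists_mem_add_one_of_cycSucc [NeZero m] (hp : IsPartition p) (hnc : IsNonCrossing p)
    {C : Finset (Fin m)} (hC : C ∈ krComplement p) {c c' : Fin m} (h : CycSucc C c c') :
    ∃ B ∈ p, c + 1 ∈ B ∧ c' ∈ B := by
  obtain ⟨B, hB, hcB⟩ := hp.exists_mem (c + 1)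
  obtain ⟨z, hz⟩ := exists_cycSucc_left hcB
  have hzc : krRel p z c := by
    simpa using krRel_sub_one_iff.2 (hnc.isUnionOfBlocks_cycIoo hp hB hz)
  have hzC : z ∈ C := hzc.symm.mem_of_mem hC h.1
  refine ⟨B, hB, hcB, ?_⟩
  suffices z = c' from this ▸ hz.1
  by_cases hcc : c = c'
  · subst hcc
    by_contra hne
    have := h.2.2 z hzC
    simp only [CycBtw, lt_self_iff_false, if_false, not_or, not_lt] at this
    exact hne (le_antisymm this.1 this.2)
  · have hgap : IsUnionOfBlocks p (cycIoo c (c' + 1)) := by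
      rw [← krRel_sub_one_iff, add_sub_cancel_right]
      exact krRel_of_mem_krComplement hC h.1 h.2.1
    have hzgap := (hgap.mem_iff hB hcB hz.1).1 (mem_cycIoo.2 (cycBtw_add_one_add_one hcc))
    by_contra hne
    exact h.2.2 z hzC ((mem_cycIoo.1 hzgap).of_add_one hne)

end KrewerasComplement

section Reduction

variable {k n : ℕ}

theorem red_add (x y : Fin ((k + 1) * n)) : red (x + y) = red x + red y := by
  apply Fin.ext
  simp only [red, Fin.val_add, Nat.mod_mod_of_dvd _ (dvd_mul_left n (k + 1))]
  exact Nat.add_mod _ _ _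

theorem red_one [NeZero n] : red (1 : Fin ((k + 1) * n)) = 1 := by
  apply Fin.ext
  simp only [red, Fin.val_one', Nat.mod_mod_of_dvd _ (dvd_mul_left n (k + 1))]

theorem red_add_one [NeZero n] (x : Fin ((k + 1) * n)) : red (x + 1) = red x + 1 := by
  rw [red_add, red_one]

theorem red_sub_one [NeZero n] (x : Fin ((k + 1) * n)) : red (x - 1) = red x - 1 :=
  eq_sub_of_add_eq (by rw [← red_add_one, sub_add_cancel])

theorem card_filter_red_eq (r : Fin n) :
    (univ.filter fun x : Fin ((k + 1) * n) => red x = r).card = k + 1 := by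
  have : (univ.filter fun x : Fin ((k + 1) * n) => red x = r) =
      univ.image fun t => finProdFinEquiv (t, r) := by
    ext x
    simp only [mem_filter, mem_univ, true_and, mem_image]
    constructor
    · rintro rfl
      refine ⟨x.divNat, finProdFinEquiv.symm.injective ?_⟩
      rw [Equiv.symm_apply_apply, finProdFinEquiv_symm_apply]
      rfl
    · rintro ⟨t, rfl⟩
      apply Fin.ext
      simp [red, finProdFinEquiv_apply_val, Nat.mod_eq_of_lt r.isLt]
  rw [this, card_image_of_injective, card_univ, Fintype.card_fin]
  intro t t' h
  simpa using finProdFinEquiv.injective h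

theorem card_filter_red_mem (W : Finset (Fin n)) :
    (univ.filter fun x : Fin ((k + 1) * n) => red x ∈ W).card = (k + 1) * W.card := by
  rw [card_eq_sum_card_fiberwise (f := red) (s := univ.filter fun x => red x ∈ W) (t := W)
    fun x hx => (mem_filter.1 hx).2, sum_congr rfl fun r hr => ?_, sum_const, smul_eq_mul,
    mul_comm W.card]
  refine (congrArg card ?_).trans (card_filter_red_eq (k := k) r)
  rw [filter_filter]
  ext x
  simp only [mem_filter, mem_univ, true_and, and_iff_right_iff_imp]
  exact fun h => h ▸ hr

variable {P : Finset (Finset (Fin ((k + 1) * n)))}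

theorem image_red_mem_redPart {B : Finset (Fin ((k + 1) * n))} (hB : B ∈ P) :
    B.image red ∈ redPart P :=
  mem_image_of_mem _ hB

theorem sum_card_filter_image_red_eq (hP : IsPartition P) (hR : IsPartition (redPart P))
    {W : Finset (Fin n)} (hW : W ∈ redPart P) :
    ∑ B ∈ P.filter (·.image red = W), B.card = (k + 1) * W.card := by
  rw [← card_filter_red_mem, ← card_biUnion]
  · congr 1
    ext x
    simp only [mem_biUnion, mem_filter, mem_univ, true_and]
    constructor
    · rintro ⟨B, ⟨-, rfl⟩, hx⟩
      exact mem_image_of_mem red hx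
    · intro hx
      obtain ⟨B, hB, hxB⟩ := hP.exists_mem x
      exact ⟨B, ⟨hB, hR.eq_of_mem (image_red_mem_redPart hB) hW (mem_image_of_mem red hxB) hx⟩,
        hxB⟩
  · intro B hB B' hB' hne
    exact disjoint_left.2 fun x hx hx' =>
      hne (hP.eq_of_mem (mem_filter.1 hB).1 (mem_filter.1 hB').1 hx hx')

theorem card_le_mul_card_redPart (hP : IsPartition P) (hR : IsPartition (redPart P)) :
    P.card ≤ (k + 1) * (redPart P).card := by
  rw [card_eq_sum_card_fiberwise (f := (·.image red)) (t := redPart P)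
    fun B hB => image_red_mem_redPart hB]
  refine (sum_le_sum (g := fun _ => k + 1) fun W hW => ?_).trans_eq
    (by rw [sum_const, smul_eq_mul, mul_comm (redPart P).card])
  refine Nat.le_of_mul_le_mul_right ?_ (card_pos.2 (hR.1 W hW))
  calc (P.filter (·.image red = W)).card * W.card
      = ∑ B ∈ P.filter (·.image red = W), (B.image red).card :=
        by rw [sum_congr rfl fun B hB => by rw [(mem_filter.1 hB).2], sum_const, smul_eq_mul]
    _ ≤ ∑ B ∈ P.filter (·.image red = W), B.card := sum_le_sum fun B _ => card_image_le
    _ = (k + 1) * W.card := sum_card_filter_image_red_eq hP hR hW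

theorem sum_card_div_card_image_red (hP : IsPartition P) (hR : IsPartition (redPart P))
    (hdvd : ∀ B ∈ P, (B.image red).card ∣ B.card) :
    ∑ B ∈ P, B.card / (B.image red).card = (k + 1) * (redPart P).card := by
  rw [← sum_fiberwise_of_maps_to (g := (·.image red)) fun B hB => image_red_mem_redPart hB]
  refine (sum_congr (g := fun _ => k + 1) rfl fun W hW => ?_).trans
    (by rw [sum_const, smul_eq_mul, mul_comm (redPart P).card])
  refine Nat.eq_of_mul_eq_mul_right (card_pos.2 (hR.1 W hW)) ?_
  rw [sum_mul, ← sum_card_filter_image_red_eq hP hR hW]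
  refine sum_congr rfl fun B hB => ?_
  obtain ⟨hBP, rfl⟩ := mem_filter.1 hB
  exact Nat.div_mul_cancel (hdvd B hBP)

theorem sum_card_div_card_image_red_sub_one (hP : IsPartition P) (hR : IsPartition (redPart P))
    (hdvd : ∀ B ∈ P, (B.image red).card ∣ B.card) :
    ∑ B ∈ P, (B.card / (B.image red).card - 1) = (k + 1) * (redPart P).card - P.card := by
  rw [sum_tsub_distrib _ fun B hB => (Nat.one_le_div_iff (card_pos.2 ((hP.1 B hB).image red))).2
    card_image_le, sum_card_div_card_image_red hP hR hdvd, sum_const, smul_eq_mul, mul_one]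

end Reduction

theorem Nat.lt_iff_div_mod_lex {n u v : ℕ} (hn : 0 < n) :
    u < v ↔ u / n < v / n ∨ u / n = v / n ∧ u % n < v % n := by
  have hu := Nat.div_add_mod u n
  have hv := Nat.div_add_mod v n
  have := Nat.mod_lt u hn
  have := Nat.mod_lt v hn
  constructor
  · intro h
    rcases lt_trichotomy (u / n) (v / n) with h1 | h1 | h1
    · exact Or.inl h1
    · exact Or.inr ⟨h1, by rw [h1] at hu; omega⟩
    · have := Nat.mul_le_mul_left n (Nat.succ_le_of_lt h1)
      rw [Nat.mul_succ] at this
      omega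
  · rintro (h1 | ⟨h1, h2⟩)
    · have := Nat.mul_le_mul_left n (Nat.succ_le_of_lt h1)
      rw [Nat.mul_succ] at this
      omega
    · rw [h1] at hu
      omega

/-- `t` is the first copy of `[n]` after the gap of `{w | i < w % n ≤ j}` that contains `u`. -/
theorem exists_copy_above_of_mod_notMem {n i j a k u : ℕ} (hn : 0 < n) (hi : i < n) (hj : j < n)
    (hu : u % n ≤ i ∨ j < u % n) (hau : a * n + i < u) (huk : u ≤ k * n + j) :
    ∃ t, a < t ∧ t ≤ k ∧ (∀ γ, γ % n ≤ j → γ / n < t → γ < u) ∧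
      ∀ δ, i < δ % n → t ≤ δ / n → u < δ := by
  have hdiv : ∀ t r, r < n → (t * n + r) / n = t := fun t r hr => by
    rw [mul_comm, Nat.mul_add_div hn, Nat.div_eq_of_lt hr, add_zero]
  rw [Nat.lt_iff_div_mod_lex hn, hdiv a i hi, Nat.mul_add_mod_of_lt hi] at hau
  rw [← not_lt, Nat.lt_iff_div_mod_lex hn, hdiv k j hj, Nat.mul_add_mod_of_lt hj] at huk
  by_cases hr : u % n ≤ i
  · refine ⟨u / n, by omega, by omega, fun γ _ h => (Nat.lt_iff_div_mod_lex hn).2 (Or.inl h),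
      fun δ hδ h => (Nat.lt_iff_div_mod_lex hn).2 (by omega)⟩
  · refine ⟨u / n + 1, by omega, by omega, fun γ hγ h => (Nat.lt_iff_div_mod_lex hn).2 (by omega),
      fun δ _ h => (Nat.lt_iff_div_mod_lex hn).2 (Or.inl (by omega))⟩

section Lift

variable {k n : ℕ} {π : Finset (Finset (Fin ((k + 1) * n)))}

theorem IsUnionOfBlocks.filter_red {T : Finset (Fin n)} (h : IsUnionOfBlocks (redPart π) T) :
    IsUnionOfBlocks π (univ.filter fun u => red u ∈ T) :=
  isUnionOfBlocks_iff.2 fun B hB x hx y hy hxT => by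
    simp only [mem_filter, mem_univ, true_and] at hxT ⊢
    exact (h.mem_iff (image_red_mem_redPart hB) (mem_image_of_mem red hx)
      (mem_image_of_mem red hy)).1 hxT

/-- No block of `P` meets `S` both below the `t`-th copy of `[n]` (the copy of `u` being
`u / n`) and in or above it. -/
def IsCutAt (P : Finset (Finset (Fin ((k + 1) * n)))) (S : Finset (Fin ((k + 1) * n)))
    (t : ℕ) : Prop :=
  ∀ B ∈ P, ∀ γ ∈ B, ∀ δ ∈ B, γ ∈ S → δ ∈ S → γ.val / n < t → δ.val / n < t

/-- Cutting `S` at the last possible copy `a`: a block outside `S` that meets `(x, y]` lies in a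
gap of `S` bridged by a block of `S` inside `(x, y]`, which it cannot cross. -/
theorem isUnionOfBlocks_Ioc_of_isCutAt (hπ : IsPartition π) (hnc : IsNonCrossing π)
    {S : Finset (Fin ((k + 1) * n))} (hS : IsUnionOfBlocks π S) {a : ℕ} (hcut : IsCutAt π S a)
    (hmax : ∀ t, a < t → t ≤ k → ¬IsCutAt π S t) {x y : Fin ((k + 1) * n)}
    (hSy : ∀ w ∈ S, w ≤ y) (hSx : ∀ w ∈ S, x < w ↔ a ≤ w.val / n)
    (hgap : ∀ u ∉ S, x < u → u ≤ y → ∃ t, a < t ∧ t ≤ k ∧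
      (∀ γ ∈ S, γ.val / n < t → γ < u) ∧ ∀ δ ∈ S, t ≤ δ.val / n → u < δ) :
    IsUnionOfBlocks π (Ioc x y) := by
  refine isUnionOfBlocks_iff.2 fun B hB u hu v hv huI => ?_
  rw [mem_Ioc] at huI ⊢
  by_cases huS : u ∈ S
  · have hvS := (hS.mem_iff hB hu hv).1 huS
    refine ⟨(hSx v hvS).2 (not_lt.1 fun h => ?_), hSy v hvS⟩
    exact not_le.2 (hcut B hB v hv u hu hvS huS h) ((hSx u huS).1 huI.1)
  obtain ⟨t, hat, htk, hbelow, habove⟩ := hgap u huS huI.1 huI.2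
  have hbridge := hmax t hat htk
  simp only [IsCutAt, not_forall, not_lt] at hbridge
  obtain ⟨B', hB', γ, hγ, δ, hδ, hγS, hδS, hγt, hδt⟩ := hbridge
  have hne : B ≠ B' := fun e => huS ((hS.mem_iff hB' hγ (e ▸ hu)).1 hγS)
  have hxγ : x < γ := (hSx γ hγS).2 (not_lt.1 fun h => by
    have := hcut B' hB' γ hγ δ hδ hγS hδS h
    omega)
  have hγu := hbelow γ hγS hγt
  have huδ := habove δ hδS hδt
  by_contra hvI
  rcases not_and_or.1 hvI with hvx | hyv
  · exact hne (hnc.eq_of_lt hπ hB hB' hv hγ hu hδ ((not_lt.1 hvx).trans_lt hxγ) hγu huδ)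
  · exact hne (hnc.eq_of_lt hπ hB' hB hγ hu hδ hv hγu huδ
      ((hSy δ hδS).trans_lt (not_le.1 hyv))).symm

/-- The lift is `x = a n + i`, `y = k n + j`, where `a` is the last copy of `[n]` at which the
blocks of `π` over `(i, j]` can be cut. -/
theorem exists_krRel_of_krRel_redPart (hn : 0 < n) (hπ : IsPartition π)
    (hnc : IsNonCrossing π) {i j : Fin n} (hij : i ≤ j) (h : krRel (redPart π) i j) :
    ∃ x y, red x = i ∧ red y = j ∧ krRel π x y := by
  rw [krRel_iff_of_le hij] at h
  set S : Finset (Fin ((k + 1) * n)) := univ.filter (fun u => red u ∈ Ioc i j) with hS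
  have hmemS : ∀ u : Fin ((k + 1) * n), u ∈ S ↔ i.val < u.val % n ∧ u.val % n ≤ j.val :=
    fun u => by simp only [hS, mem_filter, mem_univ, true_and, mem_Ioc, Fin.lt_def, Fin.le_def, red]
  have hlt : ∀ u v : Fin ((k + 1) * n), u < v ↔
      u.val / n < v.val / n ∨ u.val / n = v.val / n ∧ u.val % n < v.val % n :=
    fun u v => Fin.lt_def.trans (Nat.lt_iff_div_mod_lex hn)
  set a := Nat.findGreatest (IsCutAt π S) k
  have hcut : IsCutAt π S a :=
    Nat.findGreatest_spec (Nat.zero_le k) fun _ _ _ _ _ _ _ _ h0 => absurd h0 (Nat.not_lt_zero _)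
  have hak : a ≤ k := Nat.findGreatest_le k
  have hkn : a * n + n ≤ (k + 1) * n := by nlinarith
  let x : Fin ((k + 1) * n) := ⟨a * n + i, by have := i.isLt; omega⟩
  let y : Fin ((k + 1) * n) := ⟨k * n + j, by have := j.isLt; nlinarith⟩
  have hdiv : ∀ (t : ℕ) (r : Fin n), (t * n + r) / n = t := fun t r => by
    rw [mul_comm, Nat.mul_add_div hn, Nat.div_eq_of_lt r.isLt, add_zero]
  have hx : x.val / n = a ∧ x.val % n = i := ⟨hdiv a i, Nat.mul_add_mod_of_lt i.isLt⟩
  have hy : y.val / n = k ∧ y.val % n = j := ⟨hdiv k j, Nat.mul_add_mod_of_lt j.isLt⟩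
  have hxy : x ≤ y := not_lt.1 fun h' => by
    rw [hlt] at h'
    rw [Fin.le_def] at hij
    omega
  refine ⟨x, y, Fin.ext hx.2, Fin.ext hy.2, (krRel_iff_of_le hxy).2 ?_⟩
  refine isUnionOfBlocks_Ioc_of_isCutAt hπ hnc h.filter_red hcut
    (fun t => Nat.findGreatest_is_greatest) (fun w hw => not_lt.1 fun h' => ?_) (fun w hw => ?_)
    (fun u huS hxu huy => ?_)
  · rw [hmemS] at hw
    rw [hlt] at h'
    have := Nat.lt_succ_iff.1 ((Nat.div_lt_iff_lt_mul hn).2 w.isLt)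
    omega
  · rw [hmemS] at hw
    rw [hlt]
    omega
  · obtain ⟨t, hat, htk, hbelow, habove⟩ := exists_copy_above_of_mod_notMem hn i.isLt j.isLt
      (by rw [hmemS] at huS; omega) hxu huy
    exact ⟨t, hat, htk, fun γ hγ => hbelow γ ((hmemS γ).1 hγ).2,
      fun δ hδ => habove δ ((hmemS δ).1 hδ).1⟩

end Lift

section Complement

variable {k n : ℕ} {π : Finset (Finset (Fin ((k + 1) * n)))}

theorem refines_krComplement_redPart (hn : 0 < n) (hπ : IsPartition π) (hnc : IsNonCrossing π)
    (hQ : IsPartition (redPart (krComplement π))) :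
    Refines (krComplement (redPart π)) (redPart (krComplement π)) := by
  intro D hD
  obtain ⟨i, -, rfl⟩ := mem_image.1 hD
  obtain ⟨E, hE, hiE⟩ := hQ.exists_mem i
  refine ⟨E, hE, fun j hj => ?_⟩
  have key : ∀ i' j', krRel (redPart π) i' j' → i' ≤ j' → ∃ F ∈ redPart (krComplement π),
      i' ∈ F ∧ j' ∈ F := fun i' j' hrel hle => by
    obtain ⟨x, y, rfl, rfl, hxy⟩ := exists_krRel_of_krRel_redPart hn hπ hnc hle hrel
    exact ⟨_, image_red_mem_redPart (krClass_mem_krComplement x),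
      mem_image_of_mem red (mem_krClass.2 (krRel_refl x)), mem_image_of_mem red (mem_krClass.2 hxy)⟩
  have hij := mem_krClass.1 hj
  obtain ⟨F, hF, hiF, hjF⟩ : ∃ F ∈ redPart (krComplement π), i ∈ F ∧ j ∈ F := by
    rcases le_total i j with hle | hle
    · exact key i j hij hle
    · obtain ⟨F, hF, hjF, hiF⟩ := key j i hij.symm hle
      exact ⟨F, hF, hiF, hjF⟩
  exact hQ.eq_of_mem hF hE hiF hiE ▸ hjF

theorem redPart_krComplement (hn : 0 < n) (hπ : IsPartition π) (hnc : IsNonCrossing π)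
    (hR : IsPartition (redPart π)) (hRnc : IsNonCrossing (redPart π))
    (hQ : IsPartition (redPart (krComplement π))) :
    redPart (krComplement π) = krComplement (redPart π) := by
  have : NeZero n := ⟨hn.ne'⟩
  have href := refines_krComplement_redPart hn hπ hnc hQ
  have hcount := card_add_card_krComplement hπ hnc
  have hcountR := card_add_card_krComplement hR hRnc
  have h1 := card_le_mul_card_redPart hπ hR
  have h2 := card_le_mul_card_redPart krComplement_isPartition hQ
  refine (krComplement_isPartition.eq_of_refines_of_card_le hQ href ?_).symm
  by_contra hlt
  have : (k + 1) * ((redPart π).card + (redPart (krComplement π)).card) ≤ (k + 1) * n :=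
    Nat.mul_le_mul_left _ (by omega)
  rw [mul_add] at this
  omega

theorem card_image_red_dvd_card (hπ : IsPartition π) (hnc : IsNonCrossing π) [NeZero n]
    (hRK : redPart (krComplement π) = krComplement (redPart π)) {B : Finset (Fin ((k + 1) * n))}
    (hB : B ∈ π) : (B.image red).card ∣ B.card := by
  refine card_image_dvd_card_of_cycSucc B red fun b b' h => ?_
  have hrel : krRel π b (b' - 1) :=
    krRel_sub_one_iff.2 (hnc.isUnionOfBlocks_cycIoo hπ hB h)
  have hclass : (krClass π b).image red ∈ krComplement (redPart π) :=
    hRK ▸ image_red_mem_redPart (krClass_mem_krComplement b)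
  have hrel' : krRel (redPart π) (red b) (red b' - 1) := by
    rw [← red_sub_one]
    exact krRel_of_mem_krComplement hclass (mem_image_of_mem red (mem_krClass.2 (krRel_refl b)))
      (mem_image_of_mem red (mem_krClass.2 hrel))
  exact cycSucc_of_isUnionOfBlocks (image_red_mem_redPart hB) (mem_image_of_mem red h.1)
    (mem_image_of_mem red h.2.1) (krRel_sub_one_iff.1 hrel')

theorem card_image_red_dvd_card_of_mem_krComplement (hπ : IsPartition π)
    (hnc : IsNonCrossing π) [NeZero n]
    (hRK : redPart (krComplement π) = krComplement (redPart π)) {C : Finset (Fin ((k + 1) * n))}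
    (hC : C ∈ krComplement π) : (C.image red).card ∣ C.card := by
  refine card_image_dvd_card_of_cycSucc C red fun c c' h => ?_
  obtain ⟨B, hB, hcB, hc'B⟩ := exists_mem_add_one_of_cycSucc hπ hnc hC h
  refine ⟨mem_image_of_mem red h.1, mem_image_of_mem red h.2.1, fun w hw hbtw => ?_⟩
  have hrel : krRel (redPart π) w (red c' + 1 - 1) := by
    rw [add_sub_cancel_right]
    exact krRel_of_mem_krComplement (hRK ▸ image_red_mem_redPart hC) hw
      (mem_image_of_mem red h.2.1)
  have hgap := (krRel_sub_one_iff.1 hrel).mem_iff (image_red_mem_redPart hB)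
    (mem_image_of_mem red hc'B) (red_add_one c ▸ mem_image_of_mem red hcB)
  exact hbtw.not_add_one (mem_cycIoo.1 (hgap.1 (mem_cycIoo.2 hbtw.right_add_one)))

end Complement

section Interleaved

variable {m : ℕ}

theorem card_unbar (B : Finset (Fin m)) : (unbar B).card = B.card :=
  card_image_of_injective _ fun _ _ h => congrArg (fun z => (ofLex z).1) h

theorem card_barred (B : Finset (Fin m)) : (barred B).card = B.card :=
  card_image_of_injective _ fun _ _ h => congrArg (fun z => (ofLex z).1) h

theorem image_redInterl_unbar {k n : ℕ} (B : Finset (Fin ((k + 1) * n))) :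
    (unbar B).image redInterl = unbar (B.image red) := by
  simp only [unbar, image_image]
  rfl

theorem image_redInterl_barred {k n : ℕ} (B : Finset (Fin ((k + 1) * n))) :
    (barred B).image redInterl = barred (B.image red) := by
  simp only [barred, image_image]
  rfl

theorem sum_unionPart {M : Type*} [AddCommMonoid M] {p q : Finset (Finset (Fin m))}
    (hp : ∀ B ∈ p, B.Nonempty) (f : Finset (Interl m) → M) :
    ∑ V ∈ unionPart p q, f V = ∑ B ∈ p, f (unbar B) + ∑ C ∈ q, f (barred C) := by
  rw [unionPart, sum_union, sum_image, sum_image]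
  · intro C _ C' _ h
    ext i
    simpa [toLex_mem_barred] using congrArg (toLex (i, true) ∈ ·) h
  · intro B _ B' _ h
    ext i
    simpa [toLex_mem_unbar] using congrArg (toLex (i, false) ∈ ·) h
  · refine disjoint_left.2 fun V hV hV' => ?_
    obtain ⟨B, hB, rfl⟩ := mem_image.1 hV
    obtain ⟨C, -, hCB⟩ := mem_image.1 hV'
    obtain ⟨i, hi⟩ := hp B hB
    have : toLex (i, false) ∈ barred C := by
      rw [hCB]
      exact mem_image_of_mem _ hi
    simp [toLex_mem_barred] at this

end Interleaved

/-- For every `π ∈ NC^{(k)}(n)`, writing `mult(V) = |V| / |Red(V)|`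
for a block `V` of `π ∪ Kr(π)`:
`Σ_{V ∈ blocks(π ∪ Kr(π))} (mult(V) − 1) = k`. -/
theorem stmt13 (k n : ℕ) (hn : 1 ≤ n)
    (π : Finset (Finset (Fin ((k + 1) * n)))) (hπ : π ∈ NCk k n) :
    ∑ V ∈ unionPart π (kr π), (V.card / (V.image redInterl).card - 1) = k := by
  obtain ⟨hp, hnc, hR, hRnc, hQ, -⟩ := hπ
  have : NeZero n := ⟨by omega⟩
  rw [kr_eq_krComplement hnc] at hQ ⊢
  have hRK := redPart_krComplement hn hp hnc hR hRnc hQ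
  rw [sum_unionPart hp.1]
  simp only [image_redInterl_unbar, image_redInterl_barred, card_unbar, card_barred]
  rw [sum_card_div_card_image_red_sub_one hp hR fun B hB => card_image_red_dvd_card hp hnc hRK hB,
    sum_card_div_card_image_red_sub_one krComplement_isPartition hQ
      fun C hC => card_image_red_dvd_card_of_mem_krComplement hp hnc hRK hC]
  have h1 := card_le_mul_card_redPart hp hR
  have h2 := card_le_mul_card_redPart krComplement_isPartition hQ
  have hcount := card_add_card_krComplement hp hnc
  have hcountR := card_add_card_krComplement hR hRnc
  rw [← hRK] at hcountR
  have : (k + 1) * (redPart π).card + (k + 1) * (redPart (krComplement π)).card =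
      (k + 1) * n + (k + 1) := by
    rw [← mul_add, hcountR, mul_add, mul_one]
  omega
end

section
/- Let A be a unital ℂ-algebra, K ⊆ ℝ a set having 0 as an accumulation point, and for each t ∈ K let μ_t : A → ℂ be a linear functional with μ_t(1_A) = 1. Suppose there exist linear functionals μ^{(0)}, ..., μ^{(k)} : A → ℂ such that for every a ∈ A, μ_t(a) = Σ_{i=0}^k (t^i/i!) μ^{(i)}(a) + o(t^k) as t → 0 along K. (Then necessarily μ^{(0)}(1_A) = 1 and μ^{(i)}(1_A) = 0 for i ≥ 1, so (A, (μ^{(i)})_{0≤i≤k}) is an infinitesimal noncommutative probability space of order k; let (κ_n^{(i)}) be its infinitesimal non-crossing cumulant functionals.) For each t ∈ K let ((κ_t)_n)_{n≥1} be the free cumulant functionals of (A, μ_t). Then for every n ≥ 1 and all a_1, ..., a_n ∈ A: (κ_t)_n(a_1,...,a_n) = Σ_{i=0}^k (t^i/i!) κ_n^{(i)}(a_1,...,a_n) + o(t^k) as t → 0 along K; equivalently, the i-th derivative at t = 0 of t ↦ (κ_t)_n(a_1,...,a_n) exists in this expansion sense and equals κ_n^{(i)}(a_1,...,a_n) for 0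 ≤ i ≤ k. -/
open scoped BigOperators
attribute [local instance] Classical.propDecidable

/-- The defining (infinitesimal) moment-cumulant formula: the family
`(κ^{(i)}_n)_{n ≥ 1, 0 ≤ i ≤ k}` of multilinear functionals (indexed by `ℕ`, only the
indices `i ≤ k` being relevant) is the family of infinitesimal non-crossing cumulant
functionals of `(A, (φ^{(i)})_{0 ≤ i ≤ k})`:
`Σ_{p ∈ NC(n)} Σ_{f : p → ℕ, Σ f = i} (i!/∏_V f(V)!) ∏_{V∈p} κ^{(f(V))}_{|V|}((a)|V)
  = φ^{(i)}(a_1⋯a_n)`. -/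
def InfCumFormula (k : ℕ) {A : Type*} [Ring A] [Algebra ℂ A]
    (φ : ℕ → (A →ₗ[ℂ] ℂ))
    (κ : ℕ → (n : ℕ) → MultilinearMap ℂ (fun _ : Fin n => A) ℂ) : Prop :=
  ∀ i ≤ k, ∀ (n : ℕ), 1 ≤ n → ∀ a : Fin n → A,
    ∑ p ∈ ncFinset n,
      ∑ f ∈ (Fintype.piFinset fun _ : {V // V ∈ p} => Finset.range (i + 1)) |>.filter
          (fun f => ∑ V, f V = i),
        ((i.factorial : ℂ) / ∏ V, ((f V).factorial : ℂ)) *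
          ∏ V : {V // V ∈ p}, κ (f V) V.1.card (restrictTuple a V.1)
    = φ i (List.ofFn a).prod

/-- `h(t) = o(t^k)` as `t → 0` along `K`: `h(t)/t^k → 0` as `t → 0`, `t ∈ K`. -/
def IsLittleOtk (k : ℕ) (K : Set ℝ) (h : ℝ → ℂ) : Prop :=
  Filter.Tendsto (fun t : ℝ => h t / (t : ℂ) ^ k) (nhdsWithin 0 (K \ {0})) (nhds 0)

/-!
Strong induction on `n`. The moment-cumulant formula writes `(κ_t)_n(a)` as `μ_t(a_1⋯a_n)` minus
a sum, over the non-crossing partitions `p ≠ 1_n`, of products of cumulants of strictly smaller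
orders. Expansions to order `k` as `t → 0` are stable under sums, differences and products, the
coefficients of a product being those of the product of the coefficient power series. Storing
the coefficients as exponential generating series `∑ xᵢ Xⁱ / i!`, the `i`-th coefficient of a
product over the blocks of `p` is the multinomial sum `∑_f (i! / ∏ f(V)!) ∏ κ^{(f(V))}` divided
by `i!`, i.e. exactly the term of `p` in the infinitesimal moment-cumulant formula.
-/

open Filter Asymptotics Topology Finset PowerSeries
open scoped Polynomial

lemma isLittleOtk_iff {k : ℕ} {K : Set ℝ} {h : ℝ → ℂ} :
    IsLittleOtk k K h ↔ h =o[𝓝[K \ {0}] 0] fun t => (t : ℂ) ^ k := by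
  rw [IsLittleOtk, isLittleO_iff_tendsto']
  filter_upwards [self_mem_nhdsWithin] with t ht htk
  exact absurd (pow_eq_zero_iff'.mp htk).1 (by exact_mod_cast ht.2)

section Expansion

variable {l : Filter ℝ} {k : ℕ}

def HasExpansion (l : Filter ℝ) (k : ℕ) (g : ℝ → ℂ) (b : ℂ⟦X⟧) : Prop :=
  (fun t => g t - (trunc (k + 1) b).eval (t : ℂ)) =o[l] fun t => (t : ℂ) ^ k

lemma tendsto_eval_ofReal (hl : l ≤ 𝓝 0) (p : ℂ[X]) :
    Tendsto (fun t : ℝ => p.eval (t : ℂ)) l (𝓝 (p.eval 0)) := by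
  have := (p.continuous.comp Complex.continuous_ofReal).tendsto 0
  simpa [Function.comp_def] using this.mono_left hl

lemma isLittleO_eval_of_X_pow_dvd (hl : l ≤ 𝓝 0) {p : ℂ[X]} (hp : Polynomial.X ^ (k + 1) ∣ p) :
    (fun t : ℝ => p.eval (t : ℂ)) =o[l] fun t => (t : ℂ) ^ k := by
  obtain ⟨q, rfl⟩ := hp
  have hpow : (fun t : ℝ => (t : ℂ) ^ (k + 1)) =o[l] fun t => (t : ℂ) ^ k :=
    (isLittleO_pow_pow (𝕜 := ℂ) k.lt_succ_self).comp_tendsto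
      ((Complex.continuous_ofReal.tendsto' 0 0 Complex.ofReal_zero).mono_left hl)
  simpa using hpow.mul_isBigO ((tendsto_eval_ofReal hl q).isBigO_one ℂ)

lemma hasExpansion_one : HasExpansion l k (fun _ => 1) 1 := by
  simp [HasExpansion, trunc_one]

namespace HasExpansion

variable {g h : ℝ → ℂ} {b c : ℂ⟦X⟧}

lemma congr_left (hg : HasExpansion l k g b) (hgh : g =ᶠ[l] h) : HasExpansion l k h b :=
  IsLittleO.congr' hg (hgh.mono fun t ht => by simp only [ht]) EventuallyEq.rfl

lemma congr_trunc (hg : HasExpansion l k g b) (hbc : trunc (k + 1) b = trunc (k + 1) c) :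
    HasExpansion l k g c := by
  rwa [HasExpansion, ← hbc]

lemma of_polynomial (hl : l ≤ 𝓝 0) {p : ℂ[X]} (hp : trunc (k + 1) (p : ℂ⟦X⟧) = trunc (k + 1) b)
    (hg : (fun t => g t - p.eval (t : ℂ)) =o[l] fun t => (t : ℂ) ^ k) :
    HasExpansion l k g b := by
  have hdvd : Polynomial.X ^ (k + 1) ∣ p - trunc (k + 1) b := by
    refine Polynomial.X_pow_dvd_iff.mpr fun d hd => ?_
    have := congrArg (Polynomial.coeff · d) hp
    simp only [coeff_trunc, if_pos hd, Polynomial.coeff_coe] at this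
    simp [coeff_trunc, hd, this]
  refine (hg.add (isLittleO_eval_of_X_pow_dvd hl hdvd)).congr_left fun t => ?_
  simp only [Polynomial.eval_sub]
  ring

lemma isBigO_one (hl : l ≤ 𝓝 0) (hg : HasExpansion l k g b) : g =O[l] fun _ => (1 : ℂ) := by
  have hpow : (fun t : ℝ => (t : ℂ) ^ k) =O[l] fun _ => (1 : ℂ) := by
    simpa using (tendsto_eval_ofReal hl (Polynomial.X ^ k)).isBigO_one ℂ
  refine (((IsLittleO.isBigO hg).trans hpow).add
    ((tendsto_eval_ofReal hl (trunc (k + 1) b)).isBigO_one ℂ)).congr_left fun t => ?_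
  ring

lemma add (hg : HasExpansion l k g b) (hh : HasExpansion l k h c) :
    HasExpansion l k (fun t => g t + h t) (b + c) :=
  (IsLittleO.add hg hh).congr_left fun t => by simp only [map_add, Polynomial.eval_add]; ring

lemma sub (hg : HasExpansion l k g b) (hh : HasExpansion l k h c) :
    HasExpansion l k (fun t => g t - h t) (b - c) :=
  (IsLittleO.sub hg hh).congr_left fun t => by simp only [map_sub, Polynomial.eval_sub]; ring

lemma mul (hl : l ≤ 𝓝 0) (hg : HasExpansion l k g b) (hh : HasExpansion l k h c) :
    HasExpansion l k (fun t => g t * h t) (b * c) := by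
  refine of_polynomial hl (p := trunc (k + 1) b * trunc (k + 1) c)
    (by rw [Polynomial.coe_mul, trunc_trunc_mul_trunc]) ?_
  have h₁ := IsLittleO.mul_isBigO hg (hh.isBigO_one hl)
  have h₂ := (((tendsto_eval_ofReal hl (trunc (k + 1) b)).isBigO_one ℂ).mul_isLittleO hh)
    |>.congr_right fun _ => mul_comm _ _
  refine (h₁.add h₂).congr (fun t => ?_) fun t => ?_
  · simp only [Polynomial.eval_mul]; ring
  · simp

lemma sum {ι : Type*} {s : Finset ι} {g : ι → ℝ → ℂ} {b : ι → ℂ⟦X⟧}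
    (hg : ∀ i ∈ s, HasExpansion l k (g i) (b i)) :
    HasExpansion l k (fun t => ∑ i ∈ s, g i t) (∑ i ∈ s, b i) := by
  induction s using Finset.induction_on with
  | empty => simp [HasExpansion]
  | insert i s hi ih =>
    simp only [Finset.sum_insert hi]
    exact (hg i (mem_insert_self i s)).add (ih fun j hj => hg j (mem_insert_of_mem hj))

lemma prod (hl : l ≤ 𝓝 0) {ι : Type*} {s : Finset ι} {g : ι → ℝ → ℂ} {b : ι → ℂ⟦X⟧}
    (hg : ∀ i ∈ s, HasExpansion l k (g i) (b i)) :
    HasExpansion l k (fun t => ∏ i ∈ s, g i t) (∏ i ∈ s, b i) := by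
  induction s using Finset.induction_on with
  | empty => simpa using hasExpansion_one
  | insert i s hi ih =>
    simp only [Finset.prod_insert hi]
    exact (hg i (mem_insert_self i s)).mul hl (ih fun j hj => hg j (mem_insert_of_mem hj))

end HasExpansion

end Expansion

noncomputable def egf (x : ℕ → ℂ) : ℂ⟦X⟧ :=
  PowerSeries.mk fun i => x i / i.factorial

lemma hasExpansion_egf_iff {l : Filter ℝ} {k : ℕ} {g : ℝ → ℂ} {x : ℕ → ℂ} :
    HasExpansion l k g (egf x) ↔
      (fun t => g t - ∑ i ∈ range (k + 1), (t : ℂ) ^ i / (i.factorial : ℂ) * x i)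
        =o[l] fun t => (t : ℂ) ^ k := by
  have hsum (t : ℝ) : (trunc (k + 1) (egf x)).eval (t : ℂ) =
      ∑ i ∈ range (k + 1), (t : ℂ) ^ i / (i.factorial : ℂ) * x i := by
    rw [Polynomial.eval, eval₂_trunc_eq_sum_range]
    refine sum_congr rfl fun i _ => ?_
    simp only [egf, coeff_mk, RingHom.id_apply]
    ring
  simp only [HasExpansion, hsum]

lemma sum_multinomial_eq_factorial_mul_coeff_prod_egf {ι : Type*} [Fintype ι] [DecidableEq ι]
    (x : ι → ℕ → ℂ) (i : ℕ) :
    ∑ f ∈ (Fintype.piFinset fun _ : ι => range (i + 1)).filter (fun f => ∑ v, f v = i),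
        ((i.factorial : ℂ) / ∏ v, ((f v).factorial : ℂ)) * ∏ v, x v (f v) =
      i.factorial * coeff i (∏ v, egf (x v)) := by
  rw [coeff_prod, mul_sum]
  symm
  refine sum_equiv Finsupp.equivFunOnFinite (fun f => ?_) fun f _ => ?_
  · simp only [mem_finsuppAntidiag, subset_univ, and_true, mem_filter, Fintype.mem_piFinset,
      mem_range, Finsupp.equivFunOnFinite_apply]
    refine ⟨fun hf => ⟨fun v => ?_, hf⟩, fun hf => hf.2⟩
    rw [Nat.lt_succ_iff, ← hf]
    exact single_le_sum (fun _ _ => Nat.zero_le _) (mem_univ v)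
  · simp only [egf, coeff_mk, Finsupp.equivFunOnFinite_apply, prod_div_distrib]
    ring

lemma singleton_univ_mem_ncFinset {n : ℕ} (hn : 1 ≤ n) :
    {univ} ∈ ncFinset n := by
  have : Nonempty (Fin n) := ⟨⟨0, hn⟩⟩
  simp only [ncFinset, mem_filter, mem_univ, true_and]
  refine ⟨⟨fun B hB => ?_, fun x => ⟨univ, by simp, fun B hB => mem_singleton.mp hB.1⟩⟩, ?_⟩
  · rw [mem_singleton.mp hB]
    exact univ_nonempty
  · intro a b _ _ _ _ _ _ _
    exact ⟨univ, mem_singleton_self _, mem_univ a, mem_univ b⟩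

lemma card_lt_of_mem_ncFinset {n : ℕ} {p : Finset (Finset (Fin n))} (hp : p ∈ ncFinset n)
    (hne : p ≠ {univ}) {V : Finset (Fin n)} (hV : V ∈ p) :
    1 ≤ V.card ∧ V.card < n := by
  obtain ⟨hnonempty, hunique⟩ := (mem_filter.mp hp).2.1
  refine ⟨card_pos.mpr (hnonempty V hV), lt_of_le_of_ne (by simpa using card_le_univ V) ?_⟩
  intro hcard
  have hVuniv : V = univ := eq_univ_of_card V (by simpa using hcard)
  subst hVuniv
  refine hne (eq_singleton_iff_unique_mem.mpr ⟨hV, fun B hB => ?_⟩)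
  obtain ⟨x, hx⟩ := hnonempty B hB
  exact (hunique x).unique ⟨hB, hx⟩ ⟨hV, mem_univ x⟩

lemma apply_restrictTuple_univ {A β : Type*} (F : (m : ℕ) → (Fin m → A) → β) {n : ℕ}
    (a : Fin n → A) : F (univ : Finset (Fin n)).card (restrictTuple a univ) = F n a := by
  suffices ∀ m (h : m = n) (b : Fin m → A), (∀ i, b i = a (Fin.cast h i)) → F m b = F n a from
    this _ (card_fin n) _ fun i => congrArg a <| congrFun
      (orderEmbOfFin_unique rfl (fun _ => mem_univ _) (Fin.cast_strictMono (card_fin n))).symm i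
  rintro m rfl b hb
  exact congrArg (F m) (funext hb)

section Cumulants

variable {A : Type*} [Ring A] [Algebra ℂ A]

lemma trunc_sum_prod_egf_eq {k : ℕ} {φ : ℕ → A →ₗ[ℂ] ℂ}
    {κ : ℕ → (n : ℕ) → MultilinearMap ℂ (fun _ : Fin n => A) ℂ}
    (hκ : InfCumFormula k φ κ) {n : ℕ} (hn : 1 ≤ n) (a : Fin n → A) :
    trunc (k + 1) (∑ p ∈ ncFinset n, ∏ V ∈ p, egf fun i => κ i V.card (restrictTuple a V)) =
      trunc (k + 1) (egf fun i => φ i (List.ofFn a).prod) := by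
  ext i
  simp only [coeff_trunc]
  split_ifs with hi
  · have hfac : (i.factorial : ℂ) ≠ 0 := Nat.cast_ne_zero.mpr i.factorial_ne_zero
    have hblock (p : Finset (Finset (Fin n))) :
        coeff i (∏ V ∈ p, egf fun j => κ j V.card (restrictTuple a V)) =
          (i.factorial : ℂ)⁻¹ *
            ∑ f ∈ (Fintype.piFinset fun _ : {V // V ∈ p} => range (i + 1)) |>.filter
                (fun f => ∑ V, f V = i),
              ((i.factorial : ℂ) / ∏ V, ((f V).factorial : ℂ)) *
                ∏ V : {V // V ∈ p}, κ (f V) V.1.card (restrictTuple a V.1) := by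
      rw [sum_multinomial_eq_factorial_mul_coeff_prod_egf
        (fun (V : {V // V ∈ p}) j => κ j V.1.card (restrictTuple a V.1)),
        prod_coe_sort p fun V => egf fun j => κ j V.card (restrictTuple a V),
        inv_mul_cancel_left₀ hfac]
    rw [map_sum, sum_congr rfl fun p _ => hblock p, ← mul_sum, hκ i (by omega) n hn a, egf,
      coeff_mk, inv_mul_eq_div]
  · rfl

theorem hasExpansion_freeCumulant {l : Filter ℝ} (hl : l ≤ 𝓝 0) {k : ℕ}
    {μ : ℝ → A →ₗ[ℂ] ℂ} {μ' : ℕ → A →ₗ[ℂ] ℂ}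
    (hμ : ∀ x, HasExpansion l k (fun t => μ t x) (egf fun i => μ' i x))
    {κt : ℝ → (n : ℕ) → MultilinearMap ℂ (fun _ : Fin n => A) ℂ}
    (hκt : ∀ᶠ t in l, ∀ n, 1 ≤ n → ∀ a : Fin n → A,
      ∑ p ∈ ncFinset n, ∏ V ∈ p, κt t V.card (restrictTuple a V) = μ t (List.ofFn a).prod)
    {κinf : ℕ → (n : ℕ) → MultilinearMap ℂ (fun _ : Fin n => A) ℂ}
    (hκinf : InfCumFormula k μ' κinf) (n : ℕ) (hn : 1 ≤ n) (a : Fin n → A) :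
    HasExpansion l k (fun t => κt t n a) (egf fun i => κinf i n a) := by
  induction n using Nat.strong_induction_on with
  | _ n ih =>
  have hone := singleton_univ_mem_ncFinset hn
  have hsmall : HasExpansion l k
      (fun t => ∑ p ∈ (ncFinset n).erase {univ}, ∏ V ∈ p, κt t V.card (restrictTuple a V))
      (∑ p ∈ (ncFinset n).erase {univ},
        ∏ V ∈ p, egf fun i => κinf i V.card (restrictTuple a V)) :=
    HasExpansion.sum fun p hp => HasExpansion.prod hl fun V hV =>
      have hV := card_lt_of_mem_ncFinset (mem_of_mem_erase hp) (ne_of_mem_erase hp) hV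
      ih _ hV.2 hV.1 _
  have hrec : (fun t => μ t (List.ofFn a).prod -
        ∑ p ∈ (ncFinset n).erase {univ}, ∏ V ∈ p, κt t V.card (restrictTuple a V)) =ᶠ[l]
      fun t => κt t n a := by
    filter_upwards [hκt] with t ht
    rw [← ht n hn a, ← add_sum_erase _ _ hone, prod_singleton,
      apply_restrictTuple_univ (fun m => κt t m), add_sub_cancel_right]
  refine ((hμ _).sub hsmall |>.congr_left hrec).congr_trunc ?_
  have hcoeff := trunc_sum_prod_egf_eq hκinf hn a
  rw [← add_sum_erase _ _ hone, prod_singleton,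
    apply_restrictTuple_univ (fun m x => egf fun i => κinf i m x)] at hcoeff
  rw [map_sub, ← hcoeff, map_add, add_sub_cancel_right]

end Cumulants

theorem stmt17_general (k : ℕ) (A : Type*) [Ring A] [Algebra ℂ A]
    (K : Set ℝ)
    (μ : ℝ → (A →ₗ[ℂ] ℂ))
    (μ' : ℕ → (A →ₗ[ℂ] ℂ))
    (hexp : ∀ a : A, IsLittleOtk k K fun t =>
      μ t a - ∑ i ∈ Finset.range (k + 1), (t : ℂ) ^ i / (i.factorial : ℂ) * μ' i a)
    (κt : ℝ → (n : ℕ) → MultilinearMap ℂ (fun _ : Fin n => A) ℂ)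
    (hκt : ∀ t ∈ K, ∀ (n : ℕ), 1 ≤ n → ∀ a : Fin n → A,
      ∑ p ∈ ncFinset n, ∏ V ∈ p, κt t V.card (restrictTuple a V) =
        μ t (List.ofFn a).prod)
    (κinf : ℕ → (n : ℕ) → MultilinearMap ℂ (fun _ : Fin n => A) ℂ)
    (hκinf : InfCumFormula k μ' κinf)
    (n : ℕ) (hn : 1 ≤ n) (a : Fin n → A) :
    IsLittleOtk k K fun t =>
      κt t n a - ∑ i ∈ Finset.range (k + 1),
        (t : ℂ) ^ i / (i.factorial : ℂ) * κinf i n a := by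
  rw [isLittleOtk_iff, ← hasExpansion_egf_iff]
  refine hasExpansion_freeCumulant (μ := μ) nhdsWithin_le_nhds (fun x => ?_) ?_ hκinf n hn a
  · exact hasExpansion_egf_iff.mpr (isLittleOtk_iff.mp (hexp x))
  · filter_upwards [self_mem_nhdsWithin] with t ht using hκt t ht.1

/-- **Statement 17.** Let `(μ_t)_{t ∈ K}` be states on `A` admitting an expansion
`μ_t = Σ_{i=0}^k (t^i/i!) μ^{(i)} + o(t^k)` as `t → 0` along `K` (where `0` is an
accumulation point of `K`). Let `(κ_t)_n` be the free cumulants of `(A, μ_t)` and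
`κ_n^{(i)}` the infinitesimal cumulants of `(A, (μ^{(i)})_{0 ≤ i ≤ k})`. Then
`(κ_t)_n(a_1,…,a_n) = Σ_{i=0}^k (t^i/i!) κ_n^{(i)}(a_1,…,a_n) + o(t^k)` along `K`. -/
theorem stmt17 (k : ℕ) (A : Type*) [Ring A] [Algebra ℂ A]
    (K : Set ℝ) (hK : (nhdsWithin (0 : ℝ) (K \ {0})).NeBot)
    (μ : ℝ → (A →ₗ[ℂ] ℂ)) (hμ1 : ∀ t ∈ K, μ t 1 = 1)
    (μ' : ℕ → (A →ₗ[ℂ] ℂ))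
    (hexp : ∀ a : A, IsLittleOtk k K fun t =>
      μ t a - ∑ i ∈ Finset.range (k + 1), (t : ℂ) ^ i / (i.factorial : ℂ) * μ' i a)
    (κt : ℝ → (n : ℕ) → MultilinearMap ℂ (fun _ : Fin n => A) ℂ)
    (hκt : ∀ t ∈ K, ∀ (n : ℕ), 1 ≤ n → ∀ a : Fin n → A,
      ∑ p ∈ ncFinset n, ∏ V ∈ p, κt t V.card (restrictTuple a V) =
        μ t (List.ofFn a).prod)
    (κinf : ℕ → (n : ℕ) → MultilinearMap ℂ (fun _ : Fin n => A) ℂ)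
    (hκinf : InfCumFormula k μ' κinf)
    (n : ℕ) (hn : 1 ≤ n) (a : Fin n → A) :
    IsLittleOtk k K fun t =>
      κt t n a - ∑ i ∈ Finset.range (k + 1),
        (t : ℂ) ^ i / (i.factorial : ℂ) * κinf i n a :=
  stmt17_general k A K μ μ' hexp κt hκt κinf hκinf n hn a
end
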